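/- There exist absolute constants C3, C4 > 0 such that for every integer p that is either 1 or a positive even number there is a constant D(p) (depending only on p) with the property that for every integer d ≥ D(p): C3 · p^(−1/2) ≤ Σ_{k=0}^∞ N(d,k) · min{λ_d(k), ν_d(p)} ≤ C4 · p^(−1/2). -/

import Mathlib

open Real Filter

/-- Distinct eigenvalues (up to constants) of the NTK on the sphere `S^d`:
`ν_d(k) = d^d · k^(k−2) · (k+d)^(−(k+d+1)) · (k² + k·d + d)`. -/
noncomputable def nuNT (d k : ℕ) : ℝ :=
  (d : ℝ) ^ (d : ℝ) * (k : ℝ) ^ ((k : ℝ) - 2) *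
    ((k : ℝ) + (d : ℝ)) ^ (-((k : ℝ) + (d : ℝ) + 1)) *
    ((k : ℝ) ^ 2 + (k : ℝ) * (d : ℝ) + (d : ℝ))

/-- Dimension of the space of spherical harmonics of degree `k` on `S^d ⊆ ℝ^(d+1)`. -/
def Nsph (d k : ℕ) : ℕ :=
  if k = 0 then 1
  else (k + d).choose k - (if 2 ≤ k then (k + d - 2).choose (k - 2) else 0)

/-- `λ_d(0) = 1` and `λ_d(k) = ν_d(k)` for `k ≥ 1`. -/
noncomputable def lamNT (d k : ℕ) : ℝ := if k = 0 then 1 else nuNT d k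


/-!
For `k ≥ 1` the multiplicity `N(m+1, k)` lies between `C(k+m, m)` and twice that, and Stirling's
formula gives `C(k+m, m) · ν_{m+1}(k) ≍ √(m+1) / (k^{3/2} √(k+m+1))`, which is `≲ k^{-3/2}` always
and `≍ k^{-3/2}` for `k ≤ m + 1`. As `ν_d` is decreasing, the minimum is `ν_d(p)` for `k ≤ p` and
`ν_d(k)` for `k ≥ p`. By the hockey-stick identity the terms `k ≤ p` add up to
`≲ C(p+d, d) · ν_d(p) ≲ p^{-3/2}`, the tail is `≲ ∑_{k > p} k^{-3/2} ≲ p^{-1/2}`, and once `d ≥ 2p`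
each of the `p` terms with `p < k ≤ 2p` is `≳ p^{-3/2}`.
-/

open scoped Nat

lemma add_one_pow_le_exp_one_mul_pow (n : ℕ) : ((n : ℝ) + 1) ^ n ≤ exp 1 * (n : ℝ) ^ n := by
  rcases eq_or_ne n 0 with rfl | hn
  · simp
  calc ((n : ℝ) + 1) ^ n = (1 + (n : ℝ)⁻¹) ^ n * (n : ℝ) ^ n := by
        rw [← mul_pow]; congr 1; field_simp
    _ ≤ exp 1 * (n : ℝ) ^ n := by gcongr; exact one_add_inv_pow_le_exp

lemma exp_one_mul_pow_le_add_one_pow (n : ℕ) :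
    exp 1 * (n : ℝ) ^ (n + 1) ≤ ((n : ℝ) + 1) ^ (n + 1) := by
  have h := one_sub_div_pow_le_exp_neg (n := n + 1) (t := 1) (by simp)
  rw [exp_neg, show (1 : ℝ) - 1 / ((n + 1 : ℕ) : ℝ) = n / (n + 1) by push_cast; field_simp; ring,
    div_pow, div_le_iff₀ (by positivity)] at h
  calc exp 1 * (n : ℝ) ^ (n + 1) ≤ exp 1 * ((exp 1)⁻¹ * ((n : ℝ) + 1) ^ (n + 1)) := by gcongr
    _ = ((n : ℝ) + 1) ^ (n + 1) := by field_simp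

lemma sqrt_two_pi_mul_pow_le_factorial_mul_exp_pow (n : ℕ) :
    √(2 * π * n) * (n : ℝ) ^ n ≤ n ! * exp 1 ^ n := by
  have h := mul_le_mul_of_nonneg_right (Stirling.le_factorial_stirling n)
    (pow_nonneg (exp_pos 1).le n)
  rwa [mul_assoc, div_pow, div_mul_cancel₀ _ (by positivity)] at h

lemma factorial_mul_exp_pow_le (n : ℕ) (hn : n ≠ 0) :
    n ! * exp 1 ^ n ≤ exp 1 * √n * (n : ℝ) ^ n := by
  have hs : Stirling.stirlingSeq n ≤ exp 1 / √2 := by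
    obtain ⟨m, rfl⟩ := Nat.exists_eq_succ_of_ne_zero hn
    simpa [Stirling.stirlingSeq_one] using Stirling.stirlingSeq'_antitone (Nat.zero_le m)
  have hpos : 0 < √(2 * n) * ((n : ℝ) / exp 1) ^ n := by positivity
  rw [Stirling.stirlingSeq, div_le_iff₀ hpos] at hs
  calc (n ! : ℝ) * exp 1 ^ n ≤ exp 1 / √2 * (√(2 * n) * ((n : ℝ) / exp 1) ^ n) * exp 1 ^ n := by
        gcongr
    _ = exp 1 * √n * (n : ℝ) ^ n := by
        rw [sqrt_mul (by norm_num), div_pow]; field_simp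

lemma add_choose_mul_factorial_mul_exp_pow (k d : ℕ) :
    ((k + d).choose d : ℝ) * (k ! * exp 1 ^ k) * (d ! * exp 1 ^ d) =
      (k + d)! * exp 1 ^ (k + d) := by
  rw [← Nat.add_choose_mul_factorial_mul_factorial, pow_add]
  push_cast
  ring

lemma add_choose_mul_pow_mul_pow_le (k d : ℕ) (hk : k ≠ 0) (hd : d ≠ 0) :
    ((k + d).choose d : ℝ) * k ^ k * d ^ d * (√k * √d) ≤ ((k : ℝ) + d) ^ (k + d) * √(k + d) := by
  have h2π : √(2 * π * k) * √(2 * π * d) = 2 * π * (√k * √d) := by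
    rw [sqrt_mul (x := 2 * π) (by positivity), sqrt_mul (x := 2 * π) (by positivity),
      show √(2 * π) * √k * (√(2 * π) * √d) = (√(2 * π) * √(2 * π)) * (√k * √d) by ring,
      mul_self_sqrt (by positivity)]
  have hkd : (((k + d : ℕ) : ℝ)) = k + d := by push_cast; ring
  have hchain := calc
    2 * π * (((k + d).choose d : ℝ) * k ^ k * d ^ d * (√k * √d))
        = ((k + d).choose d : ℝ) * (√(2 * π * k) * (k : ℝ) ^ k) * (√(2 * π * d) * (d : ℝ) ^ d) := by
          linear_combination (-(((k + d).choose d : ℝ) * k ^ k * d ^ d)) * h2π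
    _ ≤ ((k + d).choose d : ℝ) * (k ! * exp 1 ^ k) * (d ! * exp 1 ^ d) := by
          gcongr ?_ * ?_ * ?_ <;> exact sqrt_two_pi_mul_pow_le_factorial_mul_exp_pow _
    _ = (k + d)! * exp 1 ^ (k + d) := add_choose_mul_factorial_mul_exp_pow k d
    _ ≤ exp 1 * (((k : ℝ) + d) ^ (k + d) * √(k + d)) := by
          have := factorial_mul_exp_pow_le (k + d) (by omega)
          rw [hkd] at this
          linarith
  have he : exp 1 ≤ 2 * π := by linarith [exp_one_lt_d9, pi_gt_three]
  have : 0 ≤ ((k : ℝ) + d) ^ (k + d) * √(k + d) := by positivity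
  nlinarith [pi_pos]

lemma pow_mul_sqrt_le_four_mul_add_choose_mul_pow_mul_pow (k d : ℕ) (hk : k ≠ 0) (hd : d ≠ 0) :
    ((k : ℝ) + d) ^ (k + d) * √(k + d) ≤
      4 * (((k + d).choose d : ℝ) * k ^ k * d ^ d * (√k * √d)) := by
  have hkd : (((k + d : ℕ) : ℝ)) = k + d := by push_cast; ring
  have hchain := calc
    √(2 * π) * (((k : ℝ) + d) ^ (k + d) * √(k + d))
        = √(2 * π * ((k + d : ℕ) : ℝ)) * (((k + d : ℕ) : ℝ)) ^ (k + d) := by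
          rw [hkd, sqrt_mul (x := 2 * π) (by positivity)]; ring
    _ ≤ (k + d)! * exp 1 ^ (k + d) := sqrt_two_pi_mul_pow_le_factorial_mul_exp_pow _
    _ = ((k + d).choose d : ℝ) * (k ! * exp 1 ^ k) * (d ! * exp 1 ^ d) :=
          (add_choose_mul_factorial_mul_exp_pow k d).symm
    _ ≤ ((k + d).choose d : ℝ) * (exp 1 * √k * (k : ℝ) ^ k) * (exp 1 * √d * (d : ℝ) ^ d) := by
          gcongr ?_ * ?_ * ?_
          · exact factorial_mul_exp_pow_le k hk
          · exact factorial_mul_exp_pow_le d hd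
    _ = exp 1 ^ 2 * (((k + d).choose d : ℝ) * k ^ k * d ^ d * (√k * √d)) := by ring
  have he : exp 1 ^ 2 ≤ 4 * √(2 * π) := by
    have h2 : 2 ≤ √(2 * π) := le_sqrt_of_sq_le (by linarith [pi_gt_three])
    nlinarith [exp_one_lt_d9, exp_pos 1]
  have : 0 ≤ ((k + d).choose d : ℝ) * k ^ k * d ^ d * (√k * √d) := by positivity
  have : 0 < √(2 * π) := by positivity
  nlinarith

lemma nuNT_nonneg (d k : ℕ) : 0 ≤ nuNT d k := by
  unfold nuNT; positivity

lemma lamNT_nonneg (d k : ℕ) : 0 ≤ lamNT d k := by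
  unfold lamNT
  split_ifs
  · exact zero_le_one
  · exact nuNT_nonneg d k

lemma nuNT_eq (d k : ℕ) (hk : k ≠ 0) :
    nuNT d k = d ^ d * k ^ k * (k ^ 2 + k * d + d) / (k ^ 2 * ((k : ℝ) + d) ^ (k + d + 1)) := by
  have hk' : (0 : ℝ) < k := by positivity
  rw [nuNT, rpow_natCast, rpow_sub hk', rpow_natCast, rpow_two, rpow_neg (by positivity),
    show (k : ℝ) + d + 1 = ((k + d + 1 : ℕ) : ℝ) by push_cast; ring, rpow_natCast]
  field_simp

lemma nuNT_succ_le (d k : ℕ) (hk : k ≠ 0) : nuNT d (k + 1) ≤ nuNT d k := by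
  set n : ℝ := k + d
  have hpow : ((k : ℝ) + 1) ^ k * n ^ (k + d + 1) ≤ k ^ k * (n + 1) ^ (k + d + 1) := by
    have hn : exp 1 * n ^ (k + d + 1) ≤ (n + 1) ^ (k + d + 1) := by
      simpa [n] using exp_one_mul_pow_le_add_one_pow (k + d)
    calc ((k : ℝ) + 1) ^ k * n ^ (k + d + 1) ≤ exp 1 * k ^ k * n ^ (k + d + 1) := by
          gcongr; exact add_one_pow_le_exp_one_mul_pow k
      _ = k ^ k * (exp 1 * n ^ (k + d + 1)) := by ring
      _ ≤ k ^ k * (n + 1) ^ (k + d + 1) := by gcongr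
  have hQ : (k : ℝ) ^ 2 * ((k + 1) ^ 2 + (k + 1) * d + d) ≤
      (k + 1) * (n + 1) * (k ^ 2 + k * d + d) := by
    rw [← sub_nonneg, show (k + 1) * (n + 1) * (k ^ 2 + k * d + d) -
      (k : ℝ) ^ 2 * ((k + 1) ^ 2 + (k + 1) * d + d) =
        k ^ 3 * d + k ^ 2 * d ^ 2 + 2 * k ^ 2 * d + 2 * k * d ^ 2 + 3 * k * d + d ^ 2 + d by ring]
    positivity
  rw [nuNT_eq d k hk, nuNT_eq d (k + 1) (by omega),
    div_le_div_iff₀ (by positivity) (by positivity)]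
  push_cast
  rw [show (k : ℝ) + 1 + d = n + 1 by ring, show k + 1 + d + 1 = (k + d + 1) + 1 by ring]
  calc (d : ℝ) ^ d * (k + 1) ^ (k + 1) * ((k + 1) ^ 2 + (k + 1) * d + d) * (k ^ 2 * n ^ (k + d + 1))
      = (d : ℝ) ^ d * (k + 1) * (k ^ 2 * ((k + 1) ^ 2 + (k + 1) * d + d)) *
          ((k + 1) ^ k * n ^ (k + d + 1)) := by ring
    _ ≤ (d : ℝ) ^ d * (k + 1) * ((k + 1) * (n + 1) * (k ^ 2 + k * d + d)) *
          (k ^ k * (n + 1) ^ (k + d + 1)) := by gcongr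
    _ = (d : ℝ) ^ d * k ^ k * (k ^ 2 + k * d + d) *
          ((k + 1) ^ 2 * (n + 1) ^ (k + d + 1 + 1)) := by ring

lemma nuNT_antitoneOn (d : ℕ) : AntitoneOn (nuNT d) {k | 1 ≤ k} :=
  antitoneOn_nat_Ici_of_succ_le fun k hk ↦ nuNT_succ_le d k (by omega)

lemma add_choose_mul_nuNT_eq (d k : ℕ) (hk : k ≠ 0) :
    ((k + d).choose d : ℝ) * nuNT d k * (k * (√k * √d)) =
      ((k + d).choose d : ℝ) * k ^ k * d ^ d * (√k * √d) * ((k ^ 2 + k * d + d) /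
        (k * ((k : ℝ) + d) ^ (k + d + 1))) := by
  rw [nuNT_eq d k hk]
  field_simp

lemma add_choose_mul_nuNT_le (d k : ℕ) (hk : k ≠ 0) (hd : d ≠ 0) :
    ((k + d).choose d : ℝ) * nuNT d k * (k * (√k * √d)) ≤ 2 * √(k + d) := by
  have hk' : (1 : ℝ) ≤ k := by exact_mod_cast Nat.one_le_iff_ne_zero.mpr hk
  rw [add_choose_mul_nuNT_eq d k hk]
  calc _ ≤ ((k : ℝ) + d) ^ (k + d) * √(k + d) * ((k ^ 2 + k * d + d) /
        (k * ((k : ℝ) + d) ^ (k + d + 1))) := by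
        gcongr ?_ * _; exact add_choose_mul_pow_mul_pow_le k d hk hd
    _ = √(k + d) * ((k ^ 2 + k * d + d) / (k * (k + d))) := by
        rw [pow_succ]; field_simp; ring
    _ ≤ √(k + d) * 2 := by
        gcongr
        rw [div_le_iff₀ (by positivity)]
        nlinarith
    _ = 2 * √(k + d) := mul_comm _ _

lemma sqrt_le_four_mul_add_choose_mul_nuNT (d k : ℕ) (hk : k ≠ 0) (hd : d ≠ 0) :
    √(k + d) ≤ 4 * (((k + d).choose d : ℝ) * nuNT d k * (k * (√k * √d))) := by
  rw [add_choose_mul_nuNT_eq d k hk]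
  calc √(k + d) ≤ √(k + d) * ((k ^ 2 + k * d + d) / (k * (k + d))) := by
        apply le_mul_of_one_le_right (by positivity)
        rw [le_div_iff₀ (by positivity)]
        nlinarith
    _ = ((k : ℝ) + d) ^ (k + d) * √(k + d) * ((k ^ 2 + k * d + d) /
        (k * ((k : ℝ) + d) ^ (k + d + 1))) := by
        rw [pow_succ]; field_simp; ring
    _ ≤ _ := by
        rw [← mul_assoc]
        gcongr ?_ * _
        exact pow_mul_sqrt_le_four_mul_add_choose_mul_pow_mul_pow k d hk hd

lemma Nsph_succ_succ (m j : ℕ) :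
    Nsph (m + 1) (j + 1) = (j + 1 + m).choose m + (j + m).choose m := by
  rw [← Nat.choose_symm_add, ← Nat.choose_symm_add]
  rcases j with _ | i
  · simp [Nsph, add_comm, add_left_comm]
  · have h := Nat.choose_succ_succ' (i + m + 2) (i + 1)
    rw [Nat.choose_succ_succ' (i + m + 1) i] at h
    simp only [Nsph, Nat.add_eq_zero_iff, one_ne_zero, and_false, if_false,
      show 2 ≤ i + 1 + 1 by omega, if_true]
    rw [show i + 1 + 1 + (m + 1) = i + m + 2 + 1 by ring,
      show i + m + 2 + 1 - 2 = i + m + 1 by omega, show i + 1 + 1 - 2 = i by omega,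
      show i + 1 + 1 + m = i + m + 2 by ring, show i + 1 + m = i + m + 1 by ring]
    omega

lemma choose_le_Nsph (m k : ℕ) : (k + m).choose m ≤ Nsph (m + 1) k := by
  rcases k with _ | j
  · simp [Nsph]
  · rw [Nsph_succ_succ]; omega

lemma Nsph_le_two_mul_choose (m k : ℕ) : Nsph (m + 1) k ≤ 2 * (k + m).choose m := by
  rcases k with _ | j
  · simp [Nsph]
  · rw [Nsph_succ_succ]
    have := Nat.choose_le_choose m (show j + m ≤ j + 1 + m by omega)
    omega

lemma sum_range_Nsph_le (m p : ℕ) :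
    ∑ k ∈ Finset.range (p + 1), Nsph (m + 1) k ≤ 2 * (p + m + 1).choose (m + 1) := by
  rw [← Nat.sum_range_add_choose, Finset.mul_sum]
  exact Finset.sum_le_sum fun k _ ↦ Nsph_le_two_mul_choose m k

lemma choose_mul_nuNT_mul_eq (m k : ℕ) :
    ((k + m).choose m : ℝ) * nuNT (m + 1) k * (k * √k) * (k + (m + 1)) =
      √(m + 1) * (((k + (m + 1)).choose (m + 1) : ℝ) * nuNT (m + 1) k *
        (k * (√k * √(m + 1)))) := by
  have h := Nat.add_one_mul_choose_eq (k + m) m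
  rw [show k + m + 1 = k + (m + 1) by ring, mul_comm _ (m + 1)] at h
  have hc : ((k : ℝ) + (m + 1)) * (k + m).choose m = (m + 1) * (k + (m + 1)).choose (m + 1) := by
    exact_mod_cast h
  linear_combination (nuNT (m + 1) k * (k * √k)) * hc -
    (nuNT (m + 1) k * (k * √k) * ((k + (m + 1)).choose (m + 1) : ℝ)) *
      sq_sqrt (by positivity : (0 : ℝ) ≤ m + 1)

lemma choose_mul_nuNT_le (m k : ℕ) (hk : k ≠ 0) :
    ((k + m).choose m : ℝ) * nuNT (m + 1) k * (k * √k) ≤ 2 := by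
  have h := add_choose_mul_nuNT_le (m + 1) k hk (by omega)
  have heq := choose_mul_nuNT_mul_eq m k
  push_cast at h
  have hts : √(m + 1 : ℝ) ≤ √(k + (m + 1)) := sqrt_le_sqrt (by simp)
  have hs : √(k + (m + 1 : ℝ)) ^ 2 = k + (m + 1) := sq_sqrt (by positivity)
  rw [← hs] at heq
  -- with `s = √(k+m+1)`: by `heq` the left side times `s²` is `√(m+1) · X`,
  -- where `X ≤ 2 s` by `h`; and `√(m+1) ≤ s`
  nlinarith [sqrt_nonneg (m + 1 : ℝ)]

lemma two_mul_sqrt_add_le_three_mul_sqrt {k d : ℝ} (hk : 0 ≤ k) (hkd : k ≤ d) :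
    2 * √(k + d) ≤ 3 * √d := by
  rw [show 3 * √d = √(9 * d) by rw [sqrt_mul (by norm_num)]; norm_num,
    show 2 * √(k + d) = √(4 * (k + d)) by rw [sqrt_mul (by norm_num)]; norm_num]
  exact sqrt_le_sqrt (by linarith)

lemma one_le_six_mul_choose_mul_nuNT (m k : ℕ) (hk : k ≠ 0) (hkm : k ≤ m + 1) :
    1 ≤ 6 * (((k + m).choose m : ℝ) * nuNT (m + 1) k * (k * √k)) := by
  have h := sqrt_le_four_mul_add_choose_mul_nuNT (m + 1) k hk (by omega)
  have heq := choose_mul_nuNT_mul_eq m k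
  push_cast at h
  have hts := two_mul_sqrt_add_le_three_mul_sqrt (Nat.cast_nonneg k)
    (show (k : ℝ) ≤ m + 1 by exact_mod_cast hkm)
  have hs : √(k + (m + 1 : ℝ)) ^ 2 = k + (m + 1) := sq_sqrt (by positivity)
  have hs0 : 0 < √(k + (m + 1 : ℝ)) := by positivity
  rw [← hs] at heq
  -- with `s = √(k+m+1)`: by `heq` the bracket times `s²` is `√(m+1) · X`,
  -- where `s ≤ 4 X` by `h`; and `2 s ≤ 3 √(m+1)`
  nlinarith [sqrt_nonneg (m + 1 : ℝ)]

lemma Nsph_mul_nuNT_le (m k : ℕ) (hk : k ≠ 0) :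
    (Nsph (m + 1) k : ℝ) * nuNT (m + 1) k ≤ 4 * ((k : ℝ) * √k)⁻¹ := by
  have hN : (Nsph (m + 1) k : ℝ) ≤ 2 * (k + m).choose m := by
    exact_mod_cast Nsph_le_two_mul_choose m k
  rw [← div_eq_mul_inv, le_div_iff₀ (by positivity)]
  calc (Nsph (m + 1) k : ℝ) * nuNT (m + 1) k * (k * √k)
      ≤ 2 * (k + m).choose m * nuNT (m + 1) k * (k * √k) := by
        gcongr; exact nuNT_nonneg _ _
    _ ≤ 2 * 2 := by
        rw [mul_assoc 2, mul_assoc 2]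
        gcongr
        exact choose_mul_nuNT_le m k hk
    _ = 4 := by norm_num

lemma inv_le_Nsph_mul_nuNT (m k : ℕ) (hk : k ≠ 0) (hkm : k ≤ m + 1) :
    (6 * ((k : ℝ) * √k))⁻¹ ≤ (Nsph (m + 1) k : ℝ) * nuNT (m + 1) k := by
  have hN : ((k + m).choose m : ℝ) ≤ Nsph (m + 1) k := by exact_mod_cast choose_le_Nsph m k
  rw [← one_div, div_le_iff₀ (by positivity)]
  calc 1 ≤ 6 * (((k + m).choose m : ℝ) * nuNT (m + 1) k * (k * √k)) :=
        one_le_six_mul_choose_mul_nuNT m k hk hkm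
    _ ≤ 6 * ((Nsph (m + 1) k : ℝ) * nuNT (m + 1) k * (k * √k)) := by
        gcongr; exact nuNT_nonneg _ _
    _ = _ := by ring

lemma sum_range_Nsph_mul_nuNT_le (m p : ℕ) (hp : p ≠ 0) (hpm : p ≤ m + 1) :
    (∑ k ∈ Finset.range (p + 1), (Nsph (m + 1) k : ℝ)) * nuNT (m + 1) p ≤
      6 * ((p : ℝ) * √p)⁻¹ := by
  have hsum : (∑ k ∈ Finset.range (p + 1), (Nsph (m + 1) k : ℝ)) ≤
      2 * (p + (m + 1)).choose (m + 1) := by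
    exact_mod_cast sum_range_Nsph_le m p
  have h := add_choose_mul_nuNT_le (m + 1) p hp (by omega)
  push_cast at h
  have hst := two_mul_sqrt_add_le_three_mul_sqrt (Nat.cast_nonneg p)
    (show (p : ℝ) ≤ m + 1 by exact_mod_cast hpm)
  have ht0 : 0 < √(m + 1 : ℝ) := by positivity
  have hc : ((p + (m + 1)).choose (m + 1) : ℝ) * nuNT (m + 1) p * (p * √p) ≤ 3 := by
    nlinarith
  rw [← div_eq_mul_inv, le_div_iff₀ (by positivity)]
  calc (∑ k ∈ Finset.range (p + 1), (Nsph (m + 1) k : ℝ)) * nuNT (m + 1) p * (p * √p)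
      ≤ 2 * (p + (m + 1)).choose (m + 1) * nuNT (m + 1) p * (p * √p) := by
        gcongr; exact nuNT_nonneg _ _
    _ ≤ 2 * 3 := by
        rw [mul_assoc 2, mul_assoc 2]
        gcongr
    _ = 6 := by norm_num

lemma inv_mul_sqrt_le_sub (x : ℝ) (hx : 0 < x) :
    ((x + 1) * √(x + 1))⁻¹ ≤ 2 * (√x)⁻¹ - 2 * (√(x + 1))⁻¹ := by
  set a := √x
  set b := √(x + 1)
  have ha : 0 < a := sqrt_pos.mpr hx
  have hab : a ≤ b := sqrt_le_sqrt (by linarith)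
  have hb : 0 < b := ha.trans_le hab
  have hx1 : x + 1 = b ^ 2 := (sq_sqrt (by linarith)).symm
  have hba : b ^ 2 - a ^ 2 = 1 := by rw [← hx1, sq_sqrt hx.le]; ring
  -- `2 / a - 2 / b = 2 / (a b (a + b))` since `b ^ 2 - a ^ 2 = 1`; compare with `1 / b ^ 3`
  have key : a * b * (a + b) ≤ 2 * b ^ 3 := by nlinarith [mul_le_mul hab hab ha.le hb.le]
  rw [hx1, ← div_eq_mul_inv, ← div_eq_mul_inv, div_sub_div _ _ ha.ne' hb.ne', ← one_div,
    div_le_div_iff₀ (by positivity) (by positivity)]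
  nlinarith [mul_pos ha hb]

lemma sum_range_inv_mul_sqrt_le (p N : ℕ) (hp : p ≠ 0) :
    ∑ j ∈ Finset.range N, (((j + (p + 1) : ℕ) : ℝ) * √((j + (p + 1) : ℕ) : ℝ))⁻¹ ≤
      2 * (√p)⁻¹ := by
  calc ∑ j ∈ Finset.range N, (((j + (p + 1) : ℕ) : ℝ) * √((j + (p + 1) : ℕ) : ℝ))⁻¹
      ≤ ∑ j ∈ Finset.range N,
          (2 * (√((j + p : ℕ) : ℝ))⁻¹ - 2 * (√((j + 1 + p : ℕ) : ℝ))⁻¹) := by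
        gcongr with j
        have := inv_mul_sqrt_le_sub ((j + p : ℕ) : ℝ) (by positivity)
        push_cast at this ⊢
        rwa [show (j : ℝ) + (p + 1) = j + p + 1 by ring, show (j : ℝ) + 1 + p = j + p + 1 by ring]
    _ = 2 * (√p)⁻¹ - 2 * (√((N + p : ℕ) : ℝ))⁻¹ := by
        rw [Finset.sum_range_sub']; simp
    _ ≤ 2 * (√p)⁻¹ := by
        have : 0 ≤ 2 * (√((N + p : ℕ) : ℝ))⁻¹ := by positivity
        linarith

lemma summable_inv_mul_sqrt_add (p : ℕ) (hp : p ≠ 0) :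
    Summable fun j : ℕ ↦ (((j + (p + 1) : ℕ) : ℝ) * √((j + (p + 1) : ℕ) : ℝ))⁻¹ :=
  summable_of_sum_range_le (fun _ ↦ by positivity) (sum_range_inv_mul_sqrt_le p · hp)

lemma tsum_inv_mul_sqrt_add_le (p : ℕ) (hp : p ≠ 0) :
    ∑' j : ℕ, (((j + (p + 1) : ℕ) : ℝ) * √((j + (p + 1) : ℕ) : ℝ))⁻¹ ≤ 2 * (√p)⁻¹ :=
  Real.tsum_le_of_sum_range_le (fun _ ↦ by positivity) (sum_range_inv_mul_sqrt_le p · hp)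

section TruncatedSum

variable (m p : ℕ)

lemma min_lamNT_nuNT_of_le {k : ℕ} (hp : p ≠ 0) (hpk : p ≤ k) :
    min (lamNT (m + 1) k) (nuNT (m + 1) p) = nuNT (m + 1) k := by
  rw [lamNT, if_neg (by omega)]
  exact min_eq_left (nuNT_antitoneOn (m + 1) (show 1 ≤ p by omega) (show 1 ≤ k by omega) hpk)

lemma Nsph_mul_min_nonneg (k : ℕ) :
    0 ≤ (Nsph (m + 1) k : ℝ) * min (lamNT (m + 1) k) (nuNT (m + 1) p) :=
  mul_nonneg (Nat.cast_nonneg _) (le_min (lamNT_nonneg _ _) (nuNT_nonneg _ _))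

lemma Nsph_mul_min_le {k : ℕ} (hk : k ≠ 0) :
    (Nsph (m + 1) k : ℝ) * min (lamNT (m + 1) k) (nuNT (m + 1) p) ≤ 4 * ((k : ℝ) * √k)⁻¹ := by
  refine le_trans ?_ (Nsph_mul_nuNT_le m k hk)
  gcongr
  rw [lamNT, if_neg hk]
  exact min_le_left _ _

lemma summable_Nsph_mul_min (hp : p ≠ 0) :
    Summable fun k ↦ (Nsph (m + 1) k : ℝ) * min (lamNT (m + 1) k) (nuNT (m + 1) p) :=
  (summable_nat_add_iff (p + 1)).mp <| .of_nonneg_of_le (fun _ ↦ Nsph_mul_min_nonneg m p _)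
    (fun j ↦ Nsph_mul_min_le m p (k := j + (p + 1)) (by omega))
    ((summable_inv_mul_sqrt_add p hp).mul_left 4)

lemma le_tsum_Nsph_mul_min (hp : p ≠ 0) (hpm : 2 * p ≤ m + 1) :
    17⁻¹ * (√p)⁻¹ ≤ ∑' k, (Nsph (m + 1) k : ℝ) * min (lamNT (m + 1) k) (nuNT (m + 1) p) := by
  have hterm : ∀ k ∈ Finset.Icc (p + 1) (2 * p), (6 * (((2 * p : ℕ) : ℝ) * √((2 * p : ℕ) : ℝ)))⁻¹ ≤
      (Nsph (m + 1) k : ℝ) * min (lamNT (m + 1) k) (nuNT (m + 1) p) := by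
    intro k hk
    rw [Finset.mem_Icc] at hk
    rw [min_lamNT_nuNT_of_le m p hp (by omega)]
    refine le_trans ?_ (inv_le_Nsph_mul_nuNT m k (by omega) (by omega))
    have hk' : (k : ℝ) ≤ ((2 * p : ℕ) : ℝ) := by exact_mod_cast hk.2
    have : (0 : ℝ) < k := by exact_mod_cast (show 0 < k by omega)
    gcongr
  have hsum := Finset.card_nsmul_le_sum _ _ _ hterm
  rw [Nat.card_Icc, show 2 * p + 1 - (p + 1) = p by omega, nsmul_eq_mul] at hsum
  refine le_trans ?_ (hsum.trans (Summable.sum_le_tsum _ (fun k _ ↦ Nsph_mul_min_nonneg m p k)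
    (summable_Nsph_mul_min m p hp)))
  have hs2 : 12 * √2 ≤ 17 := by
    nlinarith [sq_sqrt (zero_le_two : (0 : ℝ) ≤ 2), sqrt_nonneg 2]
  have hp' : 0 < √p := by positivity
  calc 17⁻¹ * (√p)⁻¹ = (17 * √p)⁻¹ := (mul_inv _ _).symm
    _ ≤ (12 * √2 * √p)⁻¹ := by gcongr
    _ = p * (6 * (((2 * p : ℕ) : ℝ) * √((2 * p : ℕ) : ℝ)))⁻¹ := by
        push_cast
        rw [sqrt_mul zero_le_two, ← mul_self_sqrt (Nat.cast_nonneg p)]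
        field_simp
        ring

lemma tsum_Nsph_mul_min_le (hp : p ≠ 0) (hpm : p ≤ m + 1) :
    ∑' k, (Nsph (m + 1) k : ℝ) * min (lamNT (m + 1) k) (nuNT (m + 1) p) ≤ 14 * (√p)⁻¹ := by
  have hsum := summable_Nsph_mul_min m p hp
  rw [← hsum.sum_add_tsum_nat_add (p + 1)]
  have head : ∑ k ∈ Finset.range (p + 1),
      (Nsph (m + 1) k : ℝ) * min (lamNT (m + 1) k) (nuNT (m + 1) p) ≤ 6 * (√p)⁻¹ := by
    calc _ ≤ ∑ k ∈ Finset.range (p + 1), (Nsph (m + 1) k : ℝ) * nuNT (m + 1) p := by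
          gcongr; exact min_le_right _ _
      _ = (∑ k ∈ Finset.range (p + 1), (Nsph (m + 1) k : ℝ)) * nuNT (m + 1) p :=
          (Finset.sum_mul _ _ _).symm
      _ ≤ 6 * ((p : ℝ) * √p)⁻¹ := sum_range_Nsph_mul_nuNT_le m p hp hpm
      _ ≤ 6 * (√p)⁻¹ := by
          have : √p ≤ p * √p := le_mul_of_one_le_left (sqrt_nonneg _)
            (by exact_mod_cast Nat.one_le_iff_ne_zero.mpr hp)
          have : 0 < √p := by positivity
          gcongr
  have tail : ∑' j, (Nsph (m + 1) (j + (p + 1)) : ℝ) *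
      min (lamNT (m + 1) (j + (p + 1))) (nuNT (m + 1) p) ≤ 8 * (√p)⁻¹ := by
    calc _ ≤ ∑' j : ℕ, 4 * (((j + (p + 1) : ℕ) : ℝ) * √((j + (p + 1) : ℕ) : ℝ))⁻¹ :=
          ((summable_nat_add_iff (p + 1)).mpr hsum).tsum_le_tsum
            (fun j ↦ Nsph_mul_min_le m p (by omega))
            ((summable_inv_mul_sqrt_add p hp).mul_left 4)
      _ = 4 * ∑' j : ℕ, (((j + (p + 1) : ℕ) : ℝ) * √((j + (p + 1) : ℕ) : ℝ))⁻¹ := tsum_mul_left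
      _ ≤ 4 * (2 * (√p)⁻¹) := by gcongr; exact tsum_inv_mul_sqrt_add_le p hp
      _ = 8 * (√p)⁻¹ := by ring
  linarith

end TruncatedSum

/-- Absolute constants C3, C4 > 0 such that for every p that is 1 or positive even, and all
large d: C3·p^(−1/2) ≤ Σ_{k=0}^∞ N(d,k)·min{λ_d(k), ν_d(p)} ≤ C4·p^(−1/2). -/
theorem tsum_Nsph_min_bounds :
    ∃ C3 C4 : ℝ, 0 < C3 ∧ 0 < C4 ∧
      ∀ p : ℕ, (p = 1 ∨ (Even p ∧ 0 < p)) → ∃ D : ℕ, ∀ d : ℕ, D ≤ d →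
        C3 * (p : ℝ) ^ (-(1 / 2 : ℝ)) ≤
            ∑' k : ℕ, (Nsph d k : ℝ) * min (lamNT d k) (nuNT d p) ∧
        ∑' k : ℕ, (Nsph d k : ℝ) * min (lamNT d k) (nuNT d p) ≤
            C4 * (p : ℝ) ^ (-(1 / 2 : ℝ)) := by
  refine ⟨17⁻¹, 14, by norm_num, by norm_num, fun p hp ↦ ⟨2 * p, fun d hd ↦ ?_⟩⟩
  have hp0 : p ≠ 0 := by rcases hp with rfl | ⟨_, h⟩ <;> omega
  obtain ⟨m, rfl⟩ : ∃ m, d = m + 1 := ⟨d - 1, by omega⟩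
  rw [rpow_neg (Nat.cast_nonneg p), ← sqrt_eq_rpow]
  exact ⟨le_tsum_Nsph_mul_min m p hp0 hd, tsum_Nsph_mul_min_le m p hp0 (by omega)⟩
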